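/- In the rally-point system with first server A, the probability of a sequence yielding α points for A and β points for B with exactly r A-interruptions and A scoring last equals C(α,r) C(β-1,r-1) p_a^{α-r} p_b^{β-r} ((1-p_a)(1-p_b))^r, for r ∈ {min(β,1),…,min(α,β)}; and with B scoring last it equals C(α,r-1) C(β-1,r-1) p_a^{α-r+1} p_b^{β-r} (1-p_a) ((1-p_a)(1-p_b))^{r-1}, for r ∈ {1,…,min(α,β-1)+1}. -/

import Mathlib

open scoped BigOperators
open Filter

/-- Rally-point scoring: a trajectory is the list of rally winners (`true` = player A);
every rally scores a point for its winner, and the winner serves the next rally.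
The first argument is the current server. -/
def rpWeight (pa pb : ℝ) : Bool → List Bool → ℝ
  | _, [] => 1
  | srv, w :: rest =>
      (if srv then (if w then pa else 1 - pa) else (if w then 1 - pb else pb)) *
        rpWeight pa pb w rest

/-- Points scored by player A. -/
def rpScoreA (g : List Bool) : ℕ := g.count true

/-- Points scored by player B. -/
def rpScoreB (g : List Bool) : ℕ := g.count false

/-- A scores the last point. -/
def rpLastA (g : List Bool) : Prop := g.getLast? = some true

/-- B scores the last point. -/
def rpLastB (g : List Bool) : Prop := g.getLast? = some false

/-- Number of maximal runs of `false` in a list, the first argument being the previous value. -/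
def falseRuns : Bool → List Bool → ℕ
  | _, [] => 0
  | prev, b :: rest => (if prev && !b then 1 else 0) + falseRuns b rest

/-- Number of A-interruptions: maximal blocks of consecutive points scored by B. -/
def rpInter (g : List Bool) : ℕ := falseRuns true g

/-- Probability of a set of trajectories in the rally-point model, first server A. -/
noncomputable def rpPr (pa pb : ℝ) (E : Set (List Bool)) : ℝ :=
  ∑' g : List Bool, Set.indicator E (rpWeight pa pb true) g

/-- Conditional expectation of `f` given the event `E` in the rally-point model, first server A. -/
noncomputable def rpCondExp (pa pb : ℝ) (E : Set (List Bool)) (f : List Bool → ℝ) : ℝ :=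
  (∑' g : List Bool, Set.indicator E (fun g => rpWeight pa pb true g * f g) g) / rpPr pa pb E

/-!
Analyse the last rally. Let `P(α, β, r, s)` be the probability of reaching score `(α, β)` after
`r` A-interruptions with `s` serving next. The last rally was won by `s`, and before it the
server was either `s` again or the other player, which gives the recursions
`P(α+1, β, r, A) = p_a P(α, β, r, A) + (1 - p_b) P(α, β, r, B)` and
`P(α, β+1, r+1, B) = p_b P(α, β, r+1, B) + (1 - p_a) P(α, β, r, A)`
(a B-point after an A-point starts a new interruption). Pascal's rule shows that the
closed forms satisfy the same recursions and the same boundary values.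
-/

namespace RallyPoint

lemma falseRuns_concat (prev b : Bool) (g : List Bool) :
    falseRuns prev (g ++ [b]) = falseRuns prev g + if g.getLastD prev && !b then 1 else 0 := by
  induction g generalizing prev with
  | nil => simp [falseRuns]
  | cons w g ih => simp only [List.cons_append, falseRuns, ih, List.getLastD_cons]; ring

lemma falseRuns_le_count_false (prev : Bool) (g : List Bool) :
    falseRuns prev g ≤ g.count false := by
  induction g generalizing prev with
  | nil => simp [falseRuns]
  | cons w g ih =>
    have := ih w
    cases prev <;> cases w <;> simp [falseRuns] <;> omega

lemma falseRuns_pos {g : List Bool} (hg : g.getLastD true = false) : 0 < falseRuns true g := by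
  induction g with
  | nil => simp at hg
  | cons w g ih =>
    rw [List.getLastD_cons] at hg
    cases w
    · simp [falseRuns]
    · simpa [falseRuns] using ih hg

lemma getLast?_eq_some_iff_getLastD {g : List Bool} (hg : g ≠ []) {b d : Bool} :
    g.getLast? = some b ↔ g.getLastD d = b := by
  simp [List.getLastD_eq_getLast?, List.getLast?_eq_some_getLast hg]

lemma choose_succ_succ_mul_pow {R : Type*} [CommSemiring R] (x : R) (m s : ℕ) :
    ((m + 1).choose (s + 1) : R) * x ^ (m - s) =
      m.choose s * x ^ (m - s) + m.choose (s + 1) * x * x ^ (m - (s + 1)) := by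
  rcases le_or_gt (s + 1) m with h | h
  · obtain ⟨c, rfl⟩ := Nat.exists_eq_add_of_le h
    rw [show s + 1 + c - s = c + 1 by omega, Nat.add_sub_cancel_left, Nat.choose_succ_succ]
    push_cast
    ring
  · rw [Nat.choose_eq_zero_of_lt h, Nat.choose_succ_succ, Nat.choose_eq_zero_of_lt h]
    simp

variable (pa pb : ℝ)

def rallyProb (srv w : Bool) : ℝ :=
  if srv then (if w then pa else 1 - pa) else (if w then 1 - pb else pb)

lemma rpWeight_cons (srv w : Bool) (g : List Bool) :
    rpWeight pa pb srv (w :: g) = rallyProb pa pb srv w * rpWeight pa pb w g := rfl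

lemma rpWeight_concat (srv b : Bool) (g : List Bool) :
    rpWeight pa pb srv (g ++ [b]) =
      rpWeight pa pb srv g * rallyProb pa pb (g.getLastD srv) b := by
  induction g generalizing srv with
  | nil => simp [rpWeight_cons, rpWeight]
  | cons w g ih =>
    rw [List.cons_append, rpWeight_cons, ih, rpWeight_cons, List.getLastD_cons, mul_assoc]

/-- `g.getLastD true` is the player serving after `g`, since A serves first. -/
def pathsTo (α β r : ℕ) (srv : Bool) : Set (List Bool) :=
  {g | g.count true = α ∧ g.count false = β ∧ falseRuns true g = r ∧ g.getLastD true = srv}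

/-- The nonzero cases are written with `β = b + 1`, `r = s + 1`, so that no truncated
subtraction `β - 1`, `r - 1` occurs. -/
noncomputable def pathsToProb : ℕ → ℕ → ℕ → Bool → ℝ
  | α, 0, 0, true => pa ^ α
  | α, b + 1, s + 1, true =>
      α.choose (s + 1) * b.choose s * pa ^ (α - (s + 1)) * pb ^ (b - s) *
        ((1 - pa) * (1 - pb)) ^ (s + 1)
  | α, b + 1, s + 1, false =>
      α.choose s * b.choose s * pa ^ (α - s) * pb ^ (b - s) * (1 - pa) *
        ((1 - pa) * (1 - pb)) ^ s
  | _, _, _, _ => 0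

variable {pa pb}

lemma pathsToProb_succ_true (α β r : ℕ) :
    pathsToProb pa pb (α + 1) β r true =
      pa * pathsToProb pa pb α β r true + (1 - pb) * pathsToProb pa pb α β r false := by
  rcases β with _ | b <;> rcases r with _ | s
  · simp [pathsToProb, pow_succ, mul_comm]
  all_goals try simp [pathsToProb]
  linear_combination (b.choose s * pb ^ (b - s) * ((1 - pa) * (1 - pb)) ^ (s + 1) : ℝ) *
    choose_succ_succ_mul_pow pa α s

lemma pathsToProb_succ_succ_false (α β r : ℕ) :
    pathsToProb pa pb α (β + 1) (r + 1) false =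
      pb * pathsToProb pa pb α β (r + 1) false + (1 - pa) * pathsToProb pa pb α β r true := by
  rcases β with _ | c <;> rcases r with _ | t
  all_goals try simp [pathsToProb]
  · ring
  · ring
  · linear_combination (α.choose (t + 1) * pa ^ (α - (t + 1)) * (1 - pa) *
      ((1 - pa) * (1 - pb)) ^ (t + 1) : ℝ) * choose_succ_succ_mul_pow pb c t

lemma pathsTo_finite (α β r : ℕ) (srv : Bool) : (pathsTo α β r srv).Finite :=
  (List.finite_length_eq Bool (α + β)).subset fun g hg => by
    rw [Set.mem_ofPred_eq, ← List.count_true_add_count_false, hg.1, hg.2.1]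

lemma summable_indicator_pathsTo (α β r : ℕ) (srv : Bool) :
    Summable ((pathsTo α β r srv).indicator (rpWeight pa pb true)) :=
  summable_of_hasFiniteSupport ((pathsTo_finite α β r srv).subset Set.support_indicator_subset)

lemma pathsTo_zero_true (β r : ℕ) :
    pathsTo 0 β r true = if β = 0 ∧ r = 0 then {[]} else ∅ := by
  ext g
  constructor
  · rintro ⟨hα, rfl, rfl, hsrv⟩
    obtain rfl : g = [] := by
      by_contra hne
      rw [List.getLastD_eq_getLast?, List.getLast?_eq_some_getLast hne] at hsrv
      exact List.count_eq_zero.1 hα (hsrv ▸ List.getLast_mem hne)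
    simp [falseRuns]
  · split_ifs with h
    · rintro rfl
      simp [pathsTo, falseRuns, h.1, h.2]
    · rintro ⟨⟩

lemma pathsTo_false_eq_empty {α β r : ℕ} (h : β = 0 ∨ r = 0) : pathsTo α β r false = ∅ := by
  refine Set.eq_empty_of_forall_notMem fun g hg => ?_
  obtain ⟨-, hβ, hr, hsrv⟩ := hg
  have := falseRuns_le_count_false true g
  have := falseRuns_pos hsrv
  omega

lemma rpPr_eq_tsum_concat {E : Set (List Bool)} {b : Bool}
    (hE : ∀ g ∈ E, g.getLast? = some b) :
    rpPr pa pb E = ∑' g, E.indicator (rpWeight pa pb true) (g ++ [b]) := by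
  refine ((List.append_left_injective [b]).tsum_eq fun g hg => ?_).symm
  exact ⟨g.dropLast, List.dropLast_append_getLast? b (hE g (Set.support_indicator_subset hg))⟩

lemma indicator_pathsTo_concat_true (α β r : ℕ) (g : List Bool) :
    (pathsTo (α + 1) β r true).indicator (rpWeight pa pb true) (g ++ [true]) =
      pa * (pathsTo α β r true).indicator (rpWeight pa pb true) g +
        (1 - pb) * (pathsTo α β r false).indicator (rpWeight pa pb true) g := by
  simp only [Set.indicator_apply, pathsTo, Set.mem_ofPred_eq, List.count_append, rpWeight_concat,
    falseRuns_concat, List.getLastD_concat]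
  rcases Bool.eq_false_or_eq_true (g.getLastD true) with h | h <;>
    simp [h, rallyProb, mul_comm, -List.getLastD_eq_getLast?]

lemma indicator_pathsTo_concat_false (α β r : ℕ) (g : List Bool) :
    (pathsTo α (β + 1) (r + 1) false).indicator (rpWeight pa pb true) (g ++ [false]) =
      pb * (pathsTo α β (r + 1) false).indicator (rpWeight pa pb true) g +
        (1 - pa) * (pathsTo α β r true).indicator (rpWeight pa pb true) g := by
  simp only [Set.indicator_apply, pathsTo, Set.mem_ofPred_eq, List.count_append, rpWeight_concat,
    falseRuns_concat, List.getLastD_concat]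
  rcases Bool.eq_false_or_eq_true (g.getLastD true) with h | h <;>
    simp [h, rallyProb, mul_comm, -List.getLastD_eq_getLast?]

lemma rpPr_pathsTo_succ_true (α β r : ℕ) :
    rpPr pa pb (pathsTo (α + 1) β r true) =
      pa * rpPr pa pb (pathsTo α β r true) + (1 - pb) * rpPr pa pb (pathsTo α β r false) := by
  have hlast : ∀ g ∈ pathsTo (α + 1) β r true, g.getLast? = some true := by
    rintro g ⟨hα, -, -, hsrv⟩
    refine (getLast?_eq_some_iff_getLastD ?_).2 hsrv
    rintro rfl
    simp at hα
  rw [rpPr_eq_tsum_concat hlast, tsum_congr (indicator_pathsTo_concat_true α β r),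
    ((summable_indicator_pathsTo _ _ _ _).mul_left _).tsum_add
      ((summable_indicator_pathsTo _ _ _ _).mul_left _), tsum_mul_left, tsum_mul_left]
  rfl

lemma rpPr_pathsTo_succ_succ_false (α β r : ℕ) :
    rpPr pa pb (pathsTo α (β + 1) (r + 1) false) =
      pb * rpPr pa pb (pathsTo α β (r + 1) false) + (1 - pa) * rpPr pa pb (pathsTo α β r true) := by
  have hlast : ∀ g ∈ pathsTo α (β + 1) (r + 1) false, g.getLast? = some false := by
    rintro g ⟨-, -, -, hsrv⟩
    refine (getLast?_eq_some_iff_getLastD ?_).2 hsrv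
    rintro rfl
    simp at hsrv
  rw [rpPr_eq_tsum_concat hlast, tsum_congr (indicator_pathsTo_concat_false α β r),
    ((summable_indicator_pathsTo _ _ _ _).mul_left _).tsum_add
      ((summable_indicator_pathsTo _ _ _ _).mul_left _), tsum_mul_left, tsum_mul_left]
  rfl

theorem rpPr_pathsTo : ∀ (α β r : ℕ) (srv : Bool),
    rpPr pa pb (pathsTo α β r srv) = pathsToProb pa pb α β r srv
  | 0, β, r, true => by
    rw [pathsTo_zero_true]
    rcases β with _ | b <;> rcases r with _ | s <;> simp [rpPr, pathsToProb, rpWeight]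
  | α + 1, β, r, true => by
    rw [rpPr_pathsTo_succ_true, rpPr_pathsTo α β r true, rpPr_pathsTo α β r false,
      pathsToProb_succ_true]
  | α, 0, r, false => by
    rw [pathsTo_false_eq_empty (Or.inl rfl)]
    simp [rpPr, pathsToProb]
  | α, β + 1, 0, false => by
    rw [pathsTo_false_eq_empty (Or.inr rfl)]
    simp [rpPr, pathsToProb]
  | α, β + 1, r + 1, false => by
    rw [rpPr_pathsTo_succ_succ_false, rpPr_pathsTo α β (r + 1) false, rpPr_pathsTo α β r true,
      pathsToProb_succ_succ_false]
termination_by α β => α + β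

lemma setOf_getLast?_eq_pathsTo {α β : ℕ} (h : α + β ≠ 0) (r : ℕ) (srv : Bool) :
    {g : List Bool | rpScoreA g = α ∧ rpScoreB g = β ∧ g.getLast? = some srv ∧ rpInter g = r} =
      pathsTo α β r srv := by
  ext g
  refine and_congr_right fun hα => and_congr_right fun hβ => ?_
  have hg : g ≠ [] := by
    rintro rfl
    exact h (by simp [← hα, ← hβ, rpScoreA, rpScoreB])
  rw [getLast?_eq_some_iff_getLastD hg, and_comm]
  rfl

end RallyPoint

theorem stmt_12_general (α β : ℕ) (pa pb : ℝ) :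
    (1 ≤ α → ∀ r : ℕ, min β 1 ≤ r → r ≤ min α β →
      rpPr pa pb {g : List Bool | rpScoreA g = α ∧ rpScoreB g = β ∧ rpLastA g ∧ rpInter g = r} =
        (α.choose r : ℝ) * ((β - 1).choose (r - 1) : ℝ) * pa ^ (α - r) * pb ^ (β - r) *
          ((1 - pa) * (1 - pb)) ^ r) ∧
    (1 ≤ β → ∀ r : ℕ, 1 ≤ r → r ≤ min α (β - 1) + 1 →
      rpPr pa pb {g : List Bool | rpScoreA g = α ∧ rpScoreB g = β ∧ rpLastB g ∧ rpInter g = r} =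
        (α.choose (r - 1) : ℝ) * ((β - 1).choose (r - 1) : ℝ) * pa ^ (α + 1 - r) *
          pb ^ (β - r) * (1 - pa) * ((1 - pa) * (1 - pb)) ^ (r - 1)) := by
  refine ⟨fun hα r hr _ => ?_, fun hβ r hr _ => ?_⟩
  · simp only [rpLastA]
    rw [RallyPoint.setOf_getLast?_eq_pathsTo (by omega), RallyPoint.rpPr_pathsTo]
    rcases β with _ | b
    · obtain rfl : r = 0 := by omega
      simp [RallyPoint.pathsToProb]
    · obtain ⟨s, rfl⟩ : ∃ s, r = s + 1 := ⟨r - 1, by omega⟩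
      simp [RallyPoint.pathsToProb]
  · simp only [rpLastB]
    rw [RallyPoint.setOf_getLast?_eq_pathsTo (by omega), RallyPoint.rpPr_pathsTo]
    obtain ⟨b, rfl⟩ : ∃ b, β = b + 1 := ⟨β - 1, by omega⟩
    obtain ⟨s, rfl⟩ : ∃ s, r = s + 1 := ⟨r - 1, by omega⟩
    simp [RallyPoint.pathsToProb]

theorem stmt_12 (α β : ℕ) (pa pb : ℝ) (hpa0 : 0 ≤ pa) (hpa1 : pa ≤ 1)
    (hpb0 : 0 ≤ pb) (hpb1 : pb ≤ 1) :
    (1 ≤ α → ∀ r : ℕ, min β 1 ≤ r → r ≤ min α β →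
      rpPr pa pb {g : List Bool | rpScoreA g = α ∧ rpScoreB g = β ∧ rpLastA g ∧ rpInter g = r} =
        (α.choose r : ℝ) * ((β - 1).choose (r - 1) : ℝ) * pa ^ (α - r) * pb ^ (β - r) *
          ((1 - pa) * (1 - pb)) ^ r) ∧
    (1 ≤ β → ∀ r : ℕ, 1 ≤ r → r ≤ min α (β - 1) + 1 →
      rpPr pa pb {g : List Bool | rpScoreA g = α ∧ rpScoreB g = β ∧ rpLastB g ∧ rpInter g = r} =
        (α.choose (r - 1) : ℝ) * ((β - 1).choose (r - 1) : ℝ) * pa ^ (α + 1 - r) *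
          pb ^ (β - r) * (1 - pa) * ((1 - pa) * (1 - pb)) ^ (r - 1)) :=
  stmt_12_general α β pa pb
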